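/- Let X be a Banach space and k ∈ ℕ with k ≤ dim X. Then the map T ↦ V_k(T) is continuous on B(X) (with the operator norm topology), and it is submultiplicative: V_k(TS) ≤ V_k(T) V_k(S) for every T, S ∈ B(X). -/

import Mathlib

open Filter MeasureTheory Metric Topology Set

noncomputable section
namespace QCDS

variable {𝕜 : Type*} [RCLike 𝕜]
variable {X : Type*} [NormedAddCommGroup X] [NormedSpace 𝕜 X]
variable {M : Type*} [MetricSpace M]

def cocycle (f : M → M) (A : M → X →L[𝕜] X) : ℕ → M → X →L[𝕜] X
  | 0, _ => 1
  | n + 1, x => (cocycle f A n (f x)).comp (A x)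

def IsHolder (A : M → X →L[𝕜] X) (α : ℝ) : Prop :=
  ∃ C > 0, ∀ x y : M, ‖A x - A y‖ ≤ C * dist x y ^ α

def ClosingProperty (f : M → M) : Prop :=
  ∃ c > 0, ∃ θ > 0, ∃ l : ℕ, 0 < l ∧
    ∀ x : M, ∀ n : ℕ, ∃ j ≤ l, ∃ p : M, f^[n + j] p = p ∧
      ∀ i ≤ n, dist (f^[i] x) (f^[i] p) ≤
        c * Real.exp (-θ * min (i : ℝ) ((n : ℝ) - (i : ℝ))) * dist (f^[n] x) x

def icNorm (T : X →L[𝕜] X) : ℝ :=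
  sInf { r : ℝ | 0 < r ∧ ∃ s : Finset X, ⇑T '' ball (0 : X) 1 ⊆ ⋃ c ∈ s, ball c r }

def essSpecRadius (T : X →L[𝕜] X) : ℝ :=
  ⨅ m : ℕ, icNorm (T ^ (m + 1)) ^ (((m : ℝ) + 1)⁻¹)

def specRadius (T : X →L[𝕜] X) : ℝ :=
  ⨅ m : ℕ, ‖T ^ (m + 1)‖ ^ (((m : ℝ) + 1)⁻¹)

def IsQuasiCompactOp (T : X →L[𝕜] X) : Prop := essSpecRadius T < specRadius T

def algMult (T : X →L[𝕜] X) (γ : 𝕜) : Cardinal :=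
  Module.rank 𝕜 ↥(⨆ j : ℕ, LinearMap.ker (((T - γ • (1 : X →L[𝕜] X)) ^ j : X →L[𝕜] X) : X →ₗ[𝕜] X))

def HasExceptionalPrefix (T : X →L[𝕜] X) (m : ℕ) (lo hi : ℕ → ℝ) : Prop :=
  ∃ γ : Fin m → 𝕜,
    (∀ i : Fin m, lo i ≤ ‖γ i‖ ∧ ‖γ i‖ ≤ hi i) ∧
    (∀ i j : Fin m, i ≤ j → ‖γ j‖ ≤ ‖γ i‖) ∧
    (∀ i : Fin m, essSpecRadius T < ‖γ i‖) ∧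
    (∀ i : Fin m, LinearMap.ker ((T - γ i • (1 : X →L[𝕜] X) : X →L[𝕜] X) : X →ₗ[𝕜] X) ≠ ⊥) ∧
    (∀ z : 𝕜, ((Finset.univ.filter fun i => γ i = z).card : Cardinal) ≤ algMult T z) ∧
    (∀ z : 𝕜, LinearMap.ker ((T - z • (1 : X →L[𝕜] X) : X →L[𝕜] X) : X →ₗ[𝕜] X) ≠ ⊥ → essSpecRadius T < ‖z‖ →
      (∃ i : Fin m, ‖γ i‖ < ‖z‖) →
      ((Finset.univ.filter fun i => γ i = z).card : Cardinal) = algMult T z)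

def ConstantPeriodicData (f : M → M) (A : M → X →L[𝕜] X) (m : ℕ) (lam : ℕ → ℝ) : Prop :=
  ∀ n : ℕ, 0 < n → ∀ p : M, f^[n] p = p →
    IsQuasiCompactOp (cocycle f A n p) ∧
    HasExceptionalPrefix (cocycle f A n p) m
      (fun i => Real.exp (n * lam i)) (fun i => Real.exp (n * lam i))

def NarrowPeriodicData (f : M → M) (A : M → X →L[𝕜] X) (m : ℕ) (lam : ℕ → ℝ) (δ : ℝ) :
    Prop :=
  ∀ n : ℕ, 0 < n → ∀ p : M, f^[n] p = p →
    IsQuasiCompactOp (cocycle f A n p) ∧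
    HasExceptionalPrefix (cocycle f A n p) m
      (fun i => Real.exp (n * (lam i - δ))) (fun i => Real.exp (n * (lam i + δ)))

def gelfand (T : X →L[𝕜] X) (q : ℕ) : ℝ :=
  sInf { r : ℝ | ∃ V : Submodule 𝕜 X, IsClosed (V : Set X) ∧
    Module.rank 𝕜 (X ⧸ V) = ((q - 1 : ℕ) : Cardinal) ∧ r = ‖T.comp V.subtypeL‖ }

def DominatedPair (f : M → M) (A : M → X →L[𝕜] X) (E F : M → Submodule 𝕜 X) : Prop :=
  (∀ x, IsClosed (E x : Set X)) ∧ (∀ x, IsClosed (F x : Set X)) ∧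
  (∀ x, IsCompl (E x) (F x)) ∧
  (∃ P : M → X →L[𝕜] X, Continuous P ∧ (∀ x, ∀ v ∈ E x, P x v = v) ∧
    (∀ x, ∀ v ∈ F x, P x v = 0)) ∧
  (∀ x, ∀ n : ℕ, 0 < n → Submodule.map (cocycle f A n x : X →ₗ[𝕜] X) (E x) = E (f^[n] x)) ∧
  (∀ x, ∀ n : ℕ, 0 < n → Submodule.map (cocycle f A n x : X →ₗ[𝕜] X) (F x) ≤ F (f^[n] x)) ∧
  ∃ C > 0, ∃ τ : ℝ, 0 < τ ∧ τ < 1 ∧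
    ∀ x, ∀ n : ℕ, 0 < n → ∀ u ∈ E x, ∀ v ∈ F x, ‖u‖ = 1 → ‖v‖ = 1 →
      ‖cocycle f A n x v‖ ≤ C * τ ^ n * ‖cocycle f A n x u‖

def DominatedSplitting (f : M → M) (A : M → X →L[𝕜] X) (k : ℕ) : Prop :=
  ∃ E F : M → Submodule 𝕜 X, DominatedPair f A E F ∧
    ∀ x, Module.rank 𝕜 (E x) = (k : Cardinal)

def egr (a : ℕ → ℝ) (L : EReal) : Prop :=
  ∀ c : ℝ, ((c : EReal) < L → ∀ᶠ n : ℕ in atTop, Real.exp (c * n) ≤ a n) ∧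
    (L < (c : EReal) → ∀ᶠ n : ℕ in atTop, a n ≤ Real.exp (c * n))

def KappaBoundedBy [MeasurableSpace M] (f : M → M) (A : M → X →L[𝕜] X) (β : ℝ) : Prop :=
  ∀ μ : Measure M, IsProbabilityMeasure μ → Ergodic f μ →
    ∀ᵐ x ∂μ, ∀ᶠ n : ℕ in atTop, icNorm (cocycle f A n x) ≤ Real.exp (β * n)


section Volume

variable [NormedSpace ℝ X] [IsScalarTower ℝ 𝕜 X] [FiniteDimensional ℝ 𝕜]

open Classical in
/-- The determinant of `T` restricted to the finite-dimensional subspace `V`, defined as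
the ratio of Haar measures `ν (T '' B_V) / ν (B_{T V})` on the image subspace `T V`
(and `0` if `T` is not injective on `V`). -/
def subdet (T : X →L[𝕜] X) (V : Submodule 𝕜 X) : ℝ :=
  if h : FiniteDimensional 𝕜 V ∧ Set.InjOn T (V : Set X) then
    haveI : FiniteDimensional 𝕜 V := h.1
    haveI : FiniteDimensional 𝕜 (V.map (T : X →ₗ[𝕜] X)) :=
      Module.Finite.map V (T : X →ₗ[𝕜] X)
    haveI : FiniteDimensional ℝ (V.map (T : X →ₗ[𝕜] X)) :=
      Module.Finite.trans (R := ℝ) 𝕜 _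
    letI : MeasurableSpace (V.map (T : X →ₗ[𝕜] X)) := borel _
    haveI : BorelSpace (V.map (T : X →ₗ[𝕜] X)) := ⟨rfl⟩
    let ν : Measure (V.map (T : X →ₗ[𝕜] X)) := (Module.finBasis ℝ _).addHaar
    (ν {w : V.map (T : X →ₗ[𝕜] X) | ∃ v ∈ V, ‖v‖ ≤ 1 ∧ (w : X) = T v} /
      ν (Metric.closedBall 0 1)).toReal
  else 0

/-- The maximal `q`-dimensional volume growth `V_q(T)`. -/
def volGrowth (T : X →L[𝕜] X) (q : ℕ) : ℝ :=
  sSup { r : ℝ | ∃ V : Submodule 𝕜 X, Module.rank 𝕜 V = (q : Cardinal) ∧ r = subdet T V }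

end Volume

end QCDS

/-! On a `k`-dimensional subspace `V` with Haar measure `μ`, `det(T|_V) = μ(B_V) / μ(K_T)` where
`K_T = {v ∈ V | ‖T v‖ ≤ 1}`: `T` maps `K_T` onto the unit ball of `T V`, and ratios of Haar measures
are preserved by linear isomorphisms. This also covers non-injective `T|_V`, since then the convex
set `K_T` contains a line and a ball, hence has infinite measure. As `K_{TS} = (S|_V)⁻¹ K_T`, the
ratio is multiplicative under composition, which gives submultiplicativity.

For continuity let `‖T - T'‖ ≤ t²` and `‖T‖, ‖T'‖ ≤ N`. If `K_{T'}` lies in the ball of radius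
`1/t`, then `K_{T'} ⊆ (1 + t) K_T` and `det(T|_V) ≤ (1 + t)^k det(T'|_V)`. Otherwise `K_T` contains a
point of norm `1/(2t)`; being convex and containing the ball of radius `1/N`, it then contains about
`1/(tN)` disjoint balls of radius `1/(2N)`, so `det(T|_V) = O(t)`. Both bounds are uniform in `V`. -/
namespace QCDS

open Module
open scoped ENNReal Pointwise

section HaarRatio

theorem addHaar_div_addHaar_eq {G : Type*} [TopologicalSpace G] [AddGroup G]
    [IsTopologicalAddGroup G] [MeasurableSpace G] [BorelSpace G] [LocallyCompactSpace G]
    [SecondCountableTopology G] (μ ν : Measure G) [μ.IsAddHaarMeasure] [ν.IsAddHaarMeasure]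
    (s t : Set G) : μ s / μ t = ν s / ν t := by
  have hc := Measure.addHaarScalarFactor_pos_of_isAddHaarMeasure μ ν
  rw [Measure.isAddLeftInvariant_eq_smul μ ν]
  simp only [Measure.smul_apply, ENNReal.smul_def, smul_eq_mul]
  exact ENNReal.mul_div_mul_left _ _ (by exact_mod_cast hc.ne') ENNReal.coe_ne_top

variable {E : Type*} [NormedAddCommGroup E] [NormedSpace ℝ E] [MeasurableSpace E] [BorelSpace E]
  {F : Type*} [NormedAddCommGroup F] [NormedSpace ℝ F] [FiniteDimensional ℝ F]
  [MeasurableSpace F] [BorelSpace F]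

theorem addHaar_preimage_div_addHaar_preimage (e : E ≃L[ℝ] F) (μ : Measure E) (ν : Measure F)
    [μ.IsAddHaarMeasure] [ν.IsAddHaarMeasure] (s t : Set F) :
    μ (e ⁻¹' s) / μ (e ⁻¹' t) = ν s / ν t := by
  have : (μ.map e).IsAddHaarMeasure := e.isAddHaarMeasure_map μ
  have hmap (s : Set F) : μ (e ⁻¹' s) = μ.map e s :=
    (e.toHomeomorph.toMeasurableEquiv.map_apply s).symm
  rw [hmap, hmap, addHaar_div_addHaar_eq _ ν]

end HaarRatio

section ConvexBody

variable {E : Type*} [NormedAddCommGroup E] [NormedSpace ℝ E]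

theorem closedBall_smul_subset_of_convex {K : Set E} (hK : Convex ℝ K) {ρ : ℝ} (hρ : 0 ≤ ρ)
    (hball : closedBall (0 : E) ρ ⊆ K) {x : E} (hx : x ∈ K) {t : ℝ} (ht0 : 0 ≤ t) (ht1 : t ≤ 1) :
    closedBall (t • x) ((1 - t) * ρ) ⊆ K :=
  calc closedBall (t • x) ((1 - t) * ρ) = t • {x} + (1 - t) • closedBall (0 : E) ρ := by
        rw [smul_closedBall _ _ hρ, Set.smul_set_singleton, smul_zero, singleton_add_closedBall,
          add_zero, Real.norm_of_nonneg (sub_nonneg.2 ht1)]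
    _ ⊆ t • K + (1 - t) • K :=
        Set.add_subset_add (Set.smul_set_mono (Set.singleton_subset_iff.2 hx))
          (Set.smul_set_mono hball)
    _ ⊆ K := hK.set_combo_subset ht0 (sub_nonneg.2 ht1) (add_sub_cancel t 1)

variable {Y : Type*} [NormedAddCommGroup Y] [NormedSpace ℝ Y]

theorem convex_preimage_closedBall (u : E →L[ℝ] Y) : Convex ℝ (u ⁻¹' closedBall 0 1) :=
  (convex_closedBall 0 1).linear_preimage (u : E →ₗ[ℝ] Y)

theorem closedBall_inv_subset_preimage_closedBall {u : E →L[ℝ] Y} {N : ℝ} (hN : 0 < N)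
    (hu : ‖u‖ ≤ N) : closedBall (0 : E) N⁻¹ ⊆ u ⁻¹' closedBall 0 1 := by
  intro v hv
  rw [mem_closedBall_zero_iff] at hv
  rw [Set.mem_preimage, mem_closedBall_zero_iff]
  calc ‖u v‖ ≤ ‖u‖ * ‖v‖ := u.le_opNorm v
    _ ≤ N * N⁻¹ := mul_le_mul hu hv (norm_nonneg _) hN.le
    _ = 1 := mul_inv_cancel₀ hN.ne'

variable [MeasurableSpace E] [BorelSpace E]

/-- The balls of radius `ρ / 2` centred at `(2ρj/‖x‖) • x`, `j ≤ n`, are disjoint and lie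
in `K`. -/
theorem succ_mul_measure_closedBall_le_of_convex (μ : Measure E) [μ.IsAddHaarMeasure]
    {K : Set E} (hK : Convex ℝ K) {ρ : ℝ} (hρ : 0 < ρ) (hball : closedBall (0 : E) ρ ⊆ K)
    {x : E} (hx : x ∈ K) {n : ℕ} (hn : 4 * ρ * n ≤ ‖x‖) :
    (n + 1) * μ (closedBall (0 : E) (ρ / 2)) ≤ μ K := by
  rcases n.eq_zero_or_pos with rfl | hn0
  · simpa using measure_mono ((closedBall_subset_closedBall (by linarith)).trans hball)
  have hx0 : 0 < ‖x‖ := by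
    have : (1 : ℝ) ≤ n := by exact_mod_cast hn0
    nlinarith
  set c : ℕ → E := fun j => (2 * ρ * j / ‖x‖) • x
  have hsub (j : ℕ) (hj : j ≤ n) : closedBall (c j) (ρ / 2) ⊆ K := by
    have hjn : (j : ℝ) ≤ n := by exact_mod_cast hj
    have ht : 2 * ρ * j / ‖x‖ ≤ 1 / 2 := by
      rw [div_le_iff₀ hx0]; nlinarith
    refine (closedBall_subset_closedBall ?_).trans
      (closedBall_smul_subset_of_convex hK hρ.le hball hx (by positivity) (by linarith))
    nlinarith
  have hdisj : Set.PairwiseDisjoint (Finset.range (n + 1) : Set ℕ)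
      fun j => closedBall (c j) (ρ / 2) := by
    intro i _ j _ hij
    refine closedBall_disjoint_closedBall ?_
    have hij' : (1 : ℝ) ≤ |(i : ℝ) - j| := by
      have : (1 : ℤ) ≤ |(i : ℤ) - j| := Int.one_le_abs (sub_ne_zero.2 (by exact_mod_cast hij))
      exact_mod_cast this
    have : dist (c i) (c j) = 2 * ρ * |(i : ℝ) - j| := by
      rw [dist_eq_norm, ← sub_smul, norm_smul, Real.norm_eq_abs, ← sub_div, ← mul_sub,
        abs_div, abs_of_pos hx0, abs_mul, abs_of_pos (by positivity : (0 : ℝ) < 2 * ρ)]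
      field_simp
    rw [this]; nlinarith
  calc (n + 1) * μ (closedBall (0 : E) (ρ / 2))
      = ∑ j ∈ Finset.range (n + 1), μ (closedBall (c j) (ρ / 2)) := by
        simp [Measure.addHaar_closedBall_center μ]
    _ = μ (⋃ j ∈ Finset.range (n + 1), closedBall (c j) (ρ / 2)) :=
        (measure_biUnion_finset hdisj fun _ _ => measurableSet_closedBall).symm
    _ ≤ μ K := measure_mono <| Set.iUnion₂_subset fun j hj =>
        hsub j (Nat.lt_succ_iff.1 (Finset.mem_range.1 hj))

theorem measure_preimage_closedBall_eq_top (μ : Measure E) [μ.IsAddHaarMeasure] {u : E →L[ℝ] Y}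
    (hu : ¬ Function.Injective u) : μ (u ⁻¹' closedBall 0 1) = ∞ := by
  obtain ⟨d, hud, hd⟩ : ∃ d, u d = 0 ∧ d ≠ 0 := by
    simpa [injective_iff_map_eq_zero] using hu
  set ρ := (‖u‖ + 1)⁻¹
  have hρ : 0 < ρ := by positivity
  by_contra hK
  obtain ⟨n, hn⟩ := ENNReal.exists_nat_mul_gt (measure_closedBall_pos μ 0 (half_pos hρ)).ne' hK
  have hx : (4 * ρ * n / ‖d‖) • d ∈ u ⁻¹' closedBall 0 1 := by simp [hud]
  have hxn : ‖(4 * ρ * n / ‖d‖) • d‖ = 4 * ρ * n := by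
    rw [norm_smul, Real.norm_of_nonneg (by positivity), div_mul_cancel₀ _ (norm_ne_zero_iff.2 hd)]
  have hpack := succ_mul_measure_closedBall_le_of_convex μ (convex_preimage_closedBall u) hρ
    (closedBall_inv_subset_preimage_closedBall (by positivity) (le_add_of_nonneg_right zero_le_one))
    hx hxn.ge
  exact (hn.trans_le (le_trans (by gcongr; exact le_self_add) hpack)).false

end ConvexBody

section VolRatio

variable {E : Type*} [NormedAddCommGroup E] [NormedSpace ℝ E] [MeasurableSpace E]
  {Y : Type*} [NormedAddCommGroup Y] [NormedSpace ℝ Y]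

/-- `det u` measured in the domain: `u` maps `u⁻¹(B_Y)` onto the unit ball of `u(E)`. -/
def volRatio (μ : Measure E) (u : E →L[ℝ] Y) : ℝ :=
  (μ (closedBall 0 1) / μ (u ⁻¹' closedBall 0 1)).toReal

variable (μ : Measure E) [μ.IsAddHaarMeasure]

theorem measure_preimage_closedBall_pos (u : E →L[ℝ] Y) : 0 < μ (u ⁻¹' closedBall 0 1) :=
  μ.measure_pos_of_mem_nhds (x := 0) <| u.continuous.continuousAt.preimage_mem_nhds <| by
    simpa using closedBall_mem_nhds (0 : Y) one_pos

theorem volRatio_le_inv_of_le_measure [FiniteDimensional ℝ E] {u : E →L[ℝ] Y} {c : ℝ} (hc : 0 < c)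
    (h : ENNReal.ofReal c * μ (closedBall 0 1) ≤ μ (u ⁻¹' closedBall 0 1)) :
    volRatio μ u ≤ c⁻¹ := by
  have hB0 : μ (closedBall (0 : E) 1) ≠ 0 := (measure_closedBall_pos μ 0 one_pos).ne'
  have hBt : μ (closedBall (0 : E) 1) ≠ ∞ := measure_closedBall_lt_top.ne
  have hc0 : ENNReal.ofReal c ≠ 0 := (ENNReal.ofReal_pos.2 hc).ne'
  calc volRatio μ u
      ≤ (1 * μ (closedBall (0 : E) 1) / (ENNReal.ofReal c * μ (closedBall 0 1))).toReal := by
        rw [one_mul]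
        exact ENNReal.toReal_mono (ENNReal.div_ne_top hBt (mul_ne_zero hc0 hB0))
          (ENNReal.div_le_div_left h _)
    _ = c⁻¹ := by
        rw [ENNReal.mul_div_mul_right _ _ hB0 hBt, one_div, ENNReal.toReal_inv,
          ENNReal.toReal_ofReal hc.le]

variable [BorelSpace E]

theorem volRatio_comp_equiv {F : Type*} [NormedAddCommGroup F] [NormedSpace ℝ F]
    [FiniteDimensional ℝ F] [MeasurableSpace F] [BorelSpace F] (ν : Measure F)
    [ν.IsAddHaarMeasure] (e : E ≃L[ℝ] F) (u : F →L[ℝ] Y) :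
    volRatio μ (u ∘L (e : E →L[ℝ] F)) = volRatio ν u * volRatio μ (e : E →L[ℝ] F) := by
  have hK0 : μ (e ⁻¹' closedBall 0 1) ≠ 0 :=
    (measure_preimage_closedBall_pos μ (e : E →L[ℝ] F)).ne'
  have hKt : μ (e ⁻¹' closedBall 0 1) ≠ ∞ := by
    rw [← e.image_symm_eq_preimage]
    exact ((isCompact_closedBall 0 1).image e.symm.continuous).measure_lt_top.ne
  have hK : (μ (e ⁻¹' closedBall 0 1)).toReal ≠ 0 := ENNReal.toReal_ne_zero.2 ⟨hK0, hKt⟩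
  simp only [volRatio, ContinuousLinearMap.coe_comp, ContinuousLinearEquiv.coe_coe,
    Set.preimage_comp]
  rw [← addHaar_preimage_div_addHaar_preimage e μ ν, ENNReal.toReal_div, ENNReal.toReal_div,
    ENNReal.toReal_div, mul_comm, div_mul_div_cancel₀ hK]

variable [FiniteDimensional ℝ E]

theorem volRatio_le_pow {u : E →L[ℝ] Y} {N : ℝ} (hN : 0 < N) (hu : ‖u‖ ≤ N) :
    volRatio μ u ≤ N ^ finrank ℝ E := by
  have := volRatio_le_inv_of_le_measure μ (u := u) (c := N⁻¹ ^ finrank ℝ E)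
    (by positivity) <| by
      rw [← Measure.addHaar_closedBall' μ 0 (by positivity)]
      exact measure_mono (closedBall_inv_subset_preimage_closedBall hN hu)
  rwa [inv_pow, inv_inv] at this

theorem volRatio_mul_le_of_mem {u : E →L[ℝ] Y} {N : ℝ} (hN : 0 < N) (hu : ‖u‖ ≤ N) {z : E}
    (hz : z ∈ u ⁻¹' closedBall 0 1) :
    volRatio μ u * (‖z‖ * N) ≤ 4 * (2 * N) ^ finrank ℝ E := by
  set k := finrank ℝ E
  set n := ⌊‖z‖ * N / 4⌋₊
  have hn : 4 * N⁻¹ * n ≤ ‖z‖ := by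
    have := Nat.floor_le (a := ‖z‖ * N / 4) (by positivity)
    rw [mul_comm 4, mul_assoc, inv_mul_le_iff₀ hN]
    linarith
  have hpack := succ_mul_measure_closedBall_le_of_convex μ (convex_preimage_closedBall u)
    (inv_pos.2 hN) (closedBall_inv_subset_preimage_closedBall hN hu) (x := z) hz hn
  have hratio : volRatio μ u ≤ ((n + 1) * (N⁻¹ / 2) ^ k)⁻¹ :=
    volRatio_le_inv_of_le_measure μ (by positivity) <| by
      rw [ENNReal.ofReal_mul (by positivity), mul_assoc, ← Measure.addHaar_closedBall' μ 0
        (by positivity)]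
      exact_mod_cast hpack
  have hfloor : ‖z‖ * N < 4 * (n + 1) := by
    have := Nat.lt_floor_add_one (‖z‖ * N / 4)
    linarith
  calc volRatio μ u * (‖z‖ * N) ≤ ((n + 1) * (N⁻¹ / 2) ^ k)⁻¹ * (4 * (n + 1)) := by
        gcongr
    _ = 4 * (2 * N) ^ k := by
        rw [div_pow, inv_pow, mul_pow]
        field_simp

theorem volRatio_le_pow_mul_of_subset_smul {u w : E →L[ℝ] Y} {c : ℝ} (hc : 0 < c)
    (h : w ⁻¹' closedBall 0 1 ⊆ c • u ⁻¹' closedBall 0 1) :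
    volRatio μ u ≤ c ^ finrank ℝ E * volRatio μ w := by
  set a := ENNReal.ofReal (c ^ finrank ℝ E)
  have ha0 : a ≠ 0 := (ENNReal.ofReal_pos.2 (by positivity)).ne'
  have hK : μ (w ⁻¹' closedBall 0 1) ≤ a * μ (u ⁻¹' closedBall 0 1) :=
    calc μ (w ⁻¹' closedBall 0 1) ≤ μ (c • u ⁻¹' closedBall 0 1) := measure_mono h
      _ = a * μ (u ⁻¹' closedBall 0 1) := by
        rw [Measure.addHaar_smul, abs_of_pos (by positivity)]
  calc volRatio μ u = (a * μ (closedBall 0 1) / (a * μ (u ⁻¹' closedBall 0 1))).toReal := by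
        rw [volRatio, ENNReal.mul_div_mul_left _ _ ha0 ENNReal.ofReal_ne_top]
    _ ≤ (a * μ (closedBall 0 1) / μ (w ⁻¹' closedBall 0 1)).toReal :=
        ENNReal.toReal_mono (ENNReal.div_ne_top
          (ENNReal.mul_ne_top ENNReal.ofReal_ne_top measure_closedBall_lt_top.ne)
          (measure_preimage_closedBall_pos μ w).ne') (ENNReal.div_le_div_left hK _)
    _ = c ^ finrank ℝ E * volRatio μ w := by
        rw [mul_div_assoc, ENNReal.toReal_mul, ENNReal.toReal_ofReal (by positivity), volRatio]

theorem volRatio_le_add {u w : E →L[ℝ] Y} {N t : ℝ} (hN : 1 ≤ N) (hu : ‖u‖ ≤ N) (hw : ‖w‖ ≤ N)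
    (ht0 : 0 < t) (ht1 : t ≤ 1) (huw : ‖u - w‖ ≤ t ^ 2) :
    volRatio μ u ≤ volRatio μ w + ((1 + t) ^ finrank ℝ E - 1) * N ^ finrank ℝ E
      + 8 * (2 * N) ^ finrank ℝ E * t := by
  have hN0 : 0 < N := by linarith
  have hux (x : E) : ‖u x‖ ≤ ‖w x‖ + t ^ 2 * ‖x‖ :=
    calc ‖u x‖ = ‖w x + (u - w) x‖ := by simp
      _ ≤ ‖w x‖ + ‖u - w‖ * ‖x‖ := norm_add_le_of_le le_rfl ((u - w).le_opNorm x)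
      _ ≤ ‖w x‖ + t ^ 2 * ‖x‖ := by gcongr
  have hu0 : 0 ≤ volRatio μ u := ENNReal.toReal_nonneg
  have hw0 : 0 ≤ volRatio μ w := ENNReal.toReal_nonneg
  have hwN := volRatio_le_pow μ hN0 hw
  have hpow : 1 ≤ (1 + t) ^ finrank ℝ E := one_le_pow₀ (by linarith)
  by_cases hbdd : ∀ x ∈ w ⁻¹' closedBall 0 1, ‖x‖ ≤ t⁻¹
  · have hsub : w ⁻¹' closedBall 0 1 ⊆ (1 + t) • u ⁻¹' closedBall 0 1 := by
      intro x hx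
      rw [Set.mem_smul_set_iff_inv_smul_mem₀ (by positivity), Set.mem_preimage, map_smul,
        mem_closedBall_zero_iff, norm_smul, Real.norm_of_nonneg (by positivity),
        inv_mul_le_iff₀ (by positivity), mul_one]
      have hwx : ‖w x‖ ≤ 1 := mem_closedBall_zero_iff.1 hx
      calc ‖u x‖ ≤ ‖w x‖ + t ^ 2 * ‖x‖ := hux x
        _ ≤ 1 + t ^ 2 * t⁻¹ := by gcongr; exact hbdd x hx
        _ = 1 + t := by field_simp
    have := volRatio_le_pow_mul_of_subset_smul μ (by positivity) hsub
    have h8 : 0 ≤ 8 * (2 * N) ^ finrank ℝ E * t := by positivity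
    nlinarith [mul_le_mul_of_nonneg_left hwN (sub_nonneg.2 hpow)]
  · push Not at hbdd
    obtain ⟨x, hx, hxt⟩ := hbdd
    have htx : 1 < ‖x‖ * t := (inv_lt_iff_one_lt_mul₀ ht0).1 hxt
    have hx0 : 0 < ‖x‖ := (inv_pos.2 ht0).trans hxt
    have hwx : ‖w x‖ ≤ 1 := mem_closedBall_zero_iff.1 hx
    have hz : (2 * t * ‖x‖)⁻¹ • x ∈ u ⁻¹' closedBall 0 1 := by
      rw [Set.mem_preimage, map_smul, mem_closedBall_zero_iff, norm_smul,
        Real.norm_of_nonneg (by positivity), inv_mul_le_iff₀ (by positivity), mul_one]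
      nlinarith [hux x]
    have hzn : ‖(2 * t * ‖x‖)⁻¹ • x‖ = (2 * t)⁻¹ := by
      rw [norm_smul, Real.norm_of_nonneg (by positivity)]
      field_simp
    have := volRatio_mul_le_of_mem μ hN0 hu hz
    rw [hzn] at this
    have : volRatio μ u * N ≤ 8 * (2 * N) ^ finrank ℝ E * t := by
      field_simp at this
      linarith
    nlinarith

end VolRatio

section Subdet

variable {X : Type*} [NormedAddCommGroup X] [NormedSpace ℝ X]

def equivMapOfInjOn {Y : Type*} [NormedAddCommGroup Y] [NormedSpace ℝ Y] (f : X →L[ℝ] Y)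
    (V : Submodule ℝ X) [FiniteDimensional ℝ V] (hf : Set.InjOn f V) :
    V ≃L[ℝ] V.map (f : X →ₗ[ℝ] Y) :=
  (LinearEquiv.ofBijective ((f : X →ₗ[ℝ] Y).submoduleMap V)
    ⟨fun a b h => Subtype.ext (hf a.2 b.2 (congrArg Subtype.val h)),
      LinearMap.submoduleMap_surjective _ _⟩).toContinuousLinearEquiv

@[simp]
theorem coe_equivMapOfInjOn_apply {Y : Type*} [NormedAddCommGroup Y] [NormedSpace ℝ Y]
    (f : X →L[ℝ] Y) (V : Submodule ℝ X) [FiniteDimensional ℝ V] (hf : Set.InjOn f V) (v : V) :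
    (equivMapOfInjOn f V hf v : Y) = f v :=
  rfl

theorem subdet_eq_zero_of_not_injOn {T : X →L[ℝ] X} {V : Submodule ℝ X}
    (hT : ¬ Set.InjOn T V) : subdet T V = 0 :=
  dif_neg fun h => hT h.2

theorem subdet_nonneg (T : X →L[ℝ] X) (V : Submodule ℝ X) : 0 ≤ subdet T V := by
  unfold subdet
  split
  · exact ENNReal.toReal_nonneg
  · exact le_rfl

theorem subdet_eq_volRatio (T : X →L[ℝ] X) (V : Submodule ℝ X) [FiniteDimensional ℝ V]
    [MeasurableSpace V] [BorelSpace V] (μ : Measure V) [μ.IsAddHaarMeasure] :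
    subdet T V = volRatio μ (T ∘L V.subtypeL) := by
  by_cases hT : Set.InjOn T V
  swap
  · rw [subdet_eq_zero_of_not_injOn hT, volRatio, measure_preimage_closedBall_eq_top μ,
      ENNReal.div_top, ENNReal.toReal_zero]
    rwa [Set.injOn_iff_injective] at hT
  let _ : MeasurableSpace (V.map (T : X →ₗ[ℝ] X)) := borel _
  have : BorelSpace (V.map (T : X →ₗ[ℝ] X)) := ⟨rfl⟩
  set e := equivMapOfInjOn T V hT
  have hw (w : V.map (T : X →ₗ[ℝ] X)) : (w : X) = T (e.symm w) := by
    rw [← coe_equivMapOfInjOn_apply T V hT, e.apply_symm_apply]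
  have himage : {w : V.map (T : X →ₗ[ℝ] X) | ∃ v ∈ V, ‖v‖ ≤ 1 ∧ (w : X) = T v} =
      e.symm ⁻¹' closedBall 0 1 := by
    ext w
    simp only [Set.mem_ofPred_eq, Set.mem_preimage, mem_closedBall_zero_iff]
    constructor
    · rintro ⟨v, hv, hv1, hwv⟩
      rwa [e.symm_apply_eq.2 (Subtype.ext hwv : w = e ⟨v, hv⟩)]
    · exact fun h => ⟨e.symm w, (e.symm w).2, h, hw w⟩
  have hball : closedBall (0 : V.map (T : X →ₗ[ℝ] X)) 1 =
      e.symm ⁻¹' ((T ∘L V.subtypeL) ⁻¹' closedBall 0 1) := by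
    ext w
    simp only [Set.mem_preimage, mem_closedBall_zero_iff]
    exact iff_of_eq (congrArg (‖·‖ ≤ 1) (hw w))
  rw [subdet, dif_pos ⟨‹_›, hT⟩, himage, hball]
  exact congrArg ENNReal.toReal (addHaar_preimage_div_addHaar_preimage e.symm _ μ _ _)

theorem subdet_comp_of_injOn (T S : X →L[ℝ] X) (V : Submodule ℝ X) [FiniteDimensional ℝ V]
    (hS : Set.InjOn S V) :
    subdet (T ∘L S) V = subdet T (V.map (S : X →ₗ[ℝ] X)) * subdet S V := by
  let _ : MeasurableSpace V := borel V
  have : BorelSpace V := ⟨rfl⟩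
  set W := V.map (S : X →ₗ[ℝ] X)
  let _ : MeasurableSpace W := borel W
  have : BorelSpace W := ⟨rfl⟩
  rw [subdet_eq_volRatio _ V Measure.addHaar, subdet_eq_volRatio T W Measure.addHaar,
    subdet_eq_volRatio S V Measure.addHaar]
  exact volRatio_comp_equiv Measure.addHaar Measure.addHaar (equivMapOfInjOn S V hS)
    (T ∘L W.subtypeL)

theorem norm_comp_subtypeL_le (T : X →L[ℝ] X) (V : Submodule ℝ X) : ‖T ∘L V.subtypeL‖ ≤ ‖T‖ :=
  (T.opNorm_comp_le _).trans (mul_le_of_le_one_right (norm_nonneg T) V.norm_subtypeL_le)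

theorem subdet_le_pow {T : X →L[ℝ] X} {V : Submodule ℝ X} {k : ℕ}
    (hV : Module.rank ℝ V = k) {N : ℝ} (hN : 0 < N) (hT : ‖T‖ ≤ N) : subdet T V ≤ N ^ k := by
  have := Module.finite_of_rank_eq_nat hV
  let _ : MeasurableSpace V := borel V
  have : BorelSpace V := ⟨rfl⟩
  rw [subdet_eq_volRatio T V Measure.addHaar, ← Module.finrank_eq_of_rank_eq hV]
  exact volRatio_le_pow _ hN ((norm_comp_subtypeL_le T V).trans hT)

theorem subdet_le_add {T T' : X →L[ℝ] X} {V : Submodule ℝ X} {k : ℕ}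
    (hV : Module.rank ℝ V = k) {N t : ℝ} (hN : 1 ≤ N) (hT : ‖T‖ ≤ N) (hT' : ‖T'‖ ≤ N)
    (ht0 : 0 < t) (ht1 : t ≤ 1) (hTT' : ‖T - T'‖ ≤ t ^ 2) :
    subdet T V ≤ subdet T' V + ((1 + t) ^ k - 1) * N ^ k + 8 * (2 * N) ^ k * t := by
  have := Module.finite_of_rank_eq_nat hV
  let _ : MeasurableSpace V := borel V
  have : BorelSpace V := ⟨rfl⟩
  rw [subdet_eq_volRatio T V Measure.addHaar, subdet_eq_volRatio T' V Measure.addHaar,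
    ← Module.finrank_eq_of_rank_eq hV]
  refine volRatio_le_add _ hN ((norm_comp_subtypeL_le T V).trans hT)
    ((norm_comp_subtypeL_le T' V).trans hT') ht0 ht1 ?_
  rw [← ContinuousLinearMap.sub_comp]
  exact (norm_comp_subtypeL_le _ V).trans hTT'

end Subdet

section VolGrowth

variable {X : Type*} [NormedAddCommGroup X] [NormedSpace ℝ X]

theorem volGrowth_nonneg (T : X →L[ℝ] X) (k : ℕ) : 0 ≤ volGrowth T k :=
  Real.sSup_nonneg fun _ ⟨V, _, hr⟩ => hr ▸ subdet_nonneg T V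

theorem subdet_le_volGrowth (T : X →L[ℝ] X) {V : Submodule ℝ X} {k : ℕ}
    (hV : Module.rank ℝ V = k) : subdet T V ≤ volGrowth T k :=
  le_csSup ⟨(‖T‖ + 1) ^ k, fun _ ⟨_, hW, hr⟩ => hr ▸ subdet_le_pow hW (by positivity) (by simp)⟩
    ⟨V, hV, rfl⟩

theorem volGrowth_le_of_forall_subdet_le {T : X →L[ℝ] X} {k : ℕ} {c : ℝ} (hc : 0 ≤ c)
    (h : ∀ V : Submodule ℝ X, Module.rank ℝ V = k → subdet T V ≤ c) : volGrowth T k ≤ c :=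
  Real.sSup_le (fun _ ⟨V, hV, hr⟩ => hr ▸ h V hV) hc

theorem volGrowth_comp_le (T S : X →L[ℝ] X) (k : ℕ) :
    volGrowth (T ∘L S) k ≤ volGrowth T k * volGrowth S k := by
  refine volGrowth_le_of_forall_subdet_le
    (mul_nonneg (volGrowth_nonneg T k) (volGrowth_nonneg S k)) fun V hV => ?_
  have := Module.finite_of_rank_eq_nat hV
  by_cases hS : Set.InjOn S V
  · rw [subdet_comp_of_injOn T S V hS]
    have hW : Module.rank ℝ (V.map (S : X →ₗ[ℝ] X)) = k :=
      (equivMapOfInjOn S V hS).toLinearEquiv.rank_eq.symm.trans hV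
    exact mul_le_mul (subdet_le_volGrowth T hW) (subdet_le_volGrowth S hV) (subdet_nonneg S V)
      (volGrowth_nonneg T k)
  · rw [subdet_eq_zero_of_not_injOn fun h => hS fun a ha b hb hab => h ha hb (by simp [hab])]
    exact mul_nonneg (volGrowth_nonneg T k) (volGrowth_nonneg S k)

theorem volGrowth_le_add {T T' : X →L[ℝ] X} {k : ℕ} {N t : ℝ} (hN : 1 ≤ N) (hT : ‖T‖ ≤ N)
    (hT' : ‖T'‖ ≤ N) (ht0 : 0 < t) (ht1 : t ≤ 1) (hTT' : ‖T - T'‖ ≤ t ^ 2) :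
    volGrowth T k ≤ volGrowth T' k + ((1 + t) ^ k - 1) * N ^ k + 8 * (2 * N) ^ k * t := by
  refine volGrowth_le_of_forall_subdet_le ?_ fun V hV => ?_
  · have : 1 ≤ (1 + t) ^ k := one_le_pow₀ (by linarith)
    have := volGrowth_nonneg T' k
    positivity
  · have := subdet_le_add hV hN hT hT' ht0 ht1 hTT'
    have := subdet_le_volGrowth T' hV
    linarith

theorem volGrowth_continuous (k : ℕ) : Continuous fun T : X →L[ℝ] X => volGrowth T k := by
  refine Metric.continuous_iff.2 fun T₀ ε hε => ?_
  set N := ‖T₀‖ + 1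
  have hN : 1 ≤ N := le_add_of_nonneg_left (norm_nonneg T₀)
  have hT₀N : ‖T₀‖ ≤ N := le_add_of_nonneg_right zero_le_one
  have herr : Tendsto (fun t : ℝ => ((1 + t) ^ k - 1) * N ^ k + 8 * (2 * N) ^ k * t)
      (𝓝[>] 0) (𝓝 0) := by
    refine tendsto_nhdsWithin_of_tendsto_nhds ?_
    convert (by fun_prop : Continuous fun t : ℝ => ((1 + t) ^ k - 1) * N ^ k +
      8 * (2 * N) ^ k * t).tendsto 0 using 2
    simp
  obtain ⟨t, htε, ht0, ht1⟩ :=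
    ((herr.eventually (gt_mem_nhds hε)).and (Ioc_mem_nhdsGT one_pos)).exists
  refine ⟨t ^ 2, by positivity, fun T hT => ?_⟩
  rw [dist_eq_norm] at hT
  have hTN : ‖T‖ ≤ N := by
    have := norm_le_norm_add_norm_sub' T T₀
    nlinarith
  rw [Real.dist_eq, abs_sub_lt_iff]
  constructor
  · linarith [volGrowth_le_add (k := k) hN hTN hT₀N ht0 ht1 hT.le]
  · linarith [volGrowth_le_add (k := k) hN hT₀N hTN ht0 ht1 (norm_sub_rev T T₀ ▸ hT.le)]

end VolGrowth

theorem volGrowth_continuous_and_submultiplicative_general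
    {X : Type*} [NormedAddCommGroup X] [NormedSpace ℝ X]
    (k : ℕ) :
    Continuous (fun T : X →L[ℝ] X => volGrowth T k) ∧
    ∀ T S : X →L[ℝ] X, volGrowth (T.comp S) k ≤ volGrowth T k * volGrowth S k :=
  ⟨volGrowth_continuous k, fun T S => volGrowth_comp_le T S k⟩

/-- **Continuity and submultiplicativity of the volume growth.** For `k ≤ dim X`, the map
`T ↦ V_k(T)` is continuous on `B(X)` for the operator norm topology and is submultiplicative:
`V_k(T ∘ S) ≤ V_k(T) V_k(S)`. -/
theorem volGrowth_continuous_and_submultiplicative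
    {X : Type*} [NormedAddCommGroup X] [NormedSpace ℝ X] [CompleteSpace X]
    (k : ℕ) (hk : (k : Cardinal) ≤ Module.rank ℝ X) :
    Continuous (fun T : X →L[ℝ] X => volGrowth T k) ∧
    ∀ T S : X →L[ℝ] X, volGrowth (T.comp S) k ≤ volGrowth T k * volGrowth S k :=
  volGrowth_continuous_and_submultiplicative_general k

end QCDS
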